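/- (Full-CSIT diversity and array gains for beamforming.) Let t ≥ 1. Then lim_{P→∞} P^t·∫_{ℂ^t} Q(√(2·‖h‖²·P)) dμ(h) = (1/Γ(t))·∫_0^∞ Q(√(2u))·u^{t−1} du, and this limit is finite and strictly positive. In particular, the full-CSIT SER SERfull(P) = ∫ Q(√(2·‖h‖²·P)) dμ(h) has diversity gain exactly t. -/

import Mathlib

open MeasureTheory

noncomputable instance (t : ℕ) : MeasureSpace (EuclideanSpace ℂ (Fin t)) where
  toMeasurableSpace := inferInstance
  volume := Measure.map (WithLp.toLp 2) (volume : Measure (Fin t → ℂ))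

/-- The Gaussian tail function `Q(x) = (1/√(2π)) ∫_x^∞ exp(-u²/2) du`. -/
noncomputable def gaussianQ (x : ℝ) : ℝ :=
  (Real.sqrt (2 * Real.pi))⁻¹ * ∫ u in Set.Ioi x, Real.exp (-(u ^ 2) / 2)

/-- The standard complex Gaussian measure `CN(0, I_t)` on `ℂ^t`, with density
`h ↦ π^{-t} exp(-‖h‖²)` with respect to Lebesgue measure. -/
noncomputable def stdCGauss (t : ℕ) : Measure (EuclideanSpace ℂ (Fin t)) :=
  volume.withDensity fun h => ENNReal.ofReal ((Real.pi ^ t)⁻¹ * Real.exp (-‖h‖ ^ 2))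

/-!
Under `CN(0, I_t)` the squared norm `‖h‖²` has the `Gamma(t, 1)` law: integrating in polar
coordinates on `ℂ^t ≅ ℝ^{2t}`, whose unit ball has volume `π^t / t!`, turns a function of `‖h‖²`
into `Γ(t)⁻¹ ∫₀^∞ u^{t-1} e^{-u} g(u) du`. Substituting `v = P u` then gives
`P^t · SER(P) = Γ(t)⁻¹ ∫₀^∞ Q(√(2v)) v^{t-1} e^{-v/P} dv`, and `e^{-v/P} → 1` with dominated
convergence, the Chernoff bound `Q(x) ≤ e^{-x²/2}` making `Q(√(2v)) v^{t-1} ≤ v^{t-1} e^{-v}`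
integrable. The limit is positive because `Q > 0`.
-/

open Real Set Filter Metric Topology

lemma integral_Ioi_pos_of_pos {f : ℝ → ℝ} {a : ℝ} (hf : IntegrableOn f (Ioi a))
    (hpos : ∀ x ∈ Ioi a, 0 < f x) : 0 < ∫ x in Ioi a, f x := by
  rw [setIntegral_pos_iff_support_of_nonneg_ae
    (ae_restrict_of_forall_mem measurableSet_Ioi fun x hx => (hpos x hx).le) hf,
    inter_eq_self_of_subset_right fun x hx => Function.mem_support.2 (hpos x hx).ne']
  simp

lemma integrable_exp_neg_sq_div_two : Integrable fun u : ℝ => exp (-(u ^ 2) / 2) := by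
  simpa [neg_div, div_eq_inv_mul] using integrable_exp_neg_mul_sq (b := 1 / 2) (by norm_num)

lemma integral_exp_neg_sq_div_two : ∫ u : ℝ, exp (-(u ^ 2) / 2) = √(2 * π) := by
  have := integral_gaussian (1 / 2)
  simp only [div_eq_inv_mul] at this ⊢
  simpa [neg_mul, mul_comm] using this

lemma gaussianQ_nonneg (x : ℝ) : 0 ≤ gaussianQ x :=
  mul_nonneg (inv_nonneg.2 (sqrt_nonneg _))
    (setIntegral_nonneg measurableSet_Ioi fun _ _ => (exp_pos _).le)

lemma gaussianQ_pos (x : ℝ) : 0 < gaussianQ x :=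
  mul_pos (inv_pos.2 (sqrt_pos.2 (by positivity)))
    (integral_Ioi_pos_of_pos integrable_exp_neg_sq_div_two.integrableOn fun _ _ => exp_pos _)

lemma gaussianQ_antitone : Antitone gaussianQ := fun _ _ hxy =>
  mul_le_mul_of_nonneg_left
    (setIntegral_mono_set integrable_exp_neg_sq_div_two.integrableOn
      (.of_forall fun _ => (exp_pos _).le) (Ioi_subset_Ioi hxy).eventuallyLE)
    (inv_nonneg.2 (sqrt_nonneg _))

lemma gaussianQ_le_exp {x : ℝ} (hx : 0 ≤ x) : gaussianQ x ≤ exp (-(x ^ 2) / 2) := by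
  have hshift : Integrable fun u => exp (-((u - x) ^ 2) / 2) :=
    integrable_exp_neg_sq_div_two.comp_sub_right x
  have htail : ∫ u in Ioi x, exp (-(u ^ 2) / 2) ≤ exp (-(x ^ 2) / 2) * √(2 * π) :=
    calc ∫ u in Ioi x, exp (-(u ^ 2) / 2)
        ≤ ∫ u in Ioi x, exp (-(x ^ 2) / 2) * exp (-((u - x) ^ 2) / 2) := by
          refine setIntegral_mono_on integrable_exp_neg_sq_div_two.integrableOn
            (hshift.const_mul _).integrableOn measurableSet_Ioi fun u hu => ?_
          rw [← exp_add, exp_le_exp]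
          nlinarith [mem_Ioi.mp hu]
      _ = exp (-(x ^ 2) / 2) * ∫ u in Ioi x, exp (-((u - x) ^ 2) / 2) :=
          integral_const_mul _ _
      _ ≤ exp (-(x ^ 2) / 2) * ∫ u, exp (-((u - x) ^ 2) / 2) :=
          mul_le_mul_of_nonneg_left
            (setIntegral_le_integral hshift (.of_forall fun _ => (exp_pos _).le)) (exp_pos _).le
      _ = exp (-(x ^ 2) / 2) * √(2 * π) := by
          rw [integral_sub_right_eq_self (fun u => exp (-(u ^ 2) / 2)) x,
            integral_exp_neg_sq_div_two]
  rw [gaussianQ, inv_mul_le_iff₀ (sqrt_pos.2 (by positivity)), mul_comm]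
  exact htail

lemma integrableOn_gaussianQ_sqrt_two_mul_mul_pow (n : ℕ) :
    IntegrableOn (fun u => gaussianQ √(2 * u) * u ^ n) (Ioi 0) := by
  have hdom : IntegrableOn (fun u : ℝ => exp (-u) * u ^ n) (Ioi 0) := by
    simpa [rpow_natCast] using Real.GammaIntegral_convergent (s := n + 1) (by positivity)
  refine hdom.integrable.mono
    ((gaussianQ_antitone.measurable.comp (by fun_prop)).mul (by fun_prop)).aestronglyMeasurable
    (ae_restrict_of_forall_mem measurableSet_Ioi fun u (hu : 0 < u) => ?_)
  have hQ := gaussianQ_le_exp (sqrt_nonneg (2 * u))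
  rw [sq_sqrt (by positivity), show -(2 * u) / 2 = -u by ring] at hQ
  rw [norm_of_nonneg (mul_nonneg (gaussianQ_nonneg _) (by positivity)),
    norm_of_nonneg (by positivity)]
  gcongr

namespace EuclideanSpace

variable {t : ℕ}

instance : (volume : Measure (EuclideanSpace ℂ (Fin t))).IsAddHaarMeasure :=
  (PiLp.continuousLinearEquiv 2 ℝ fun _ : Fin t => ℂ).symm.isAddHaarMeasure_map _

lemma finrank_real_complex_fin : Module.finrank ℝ (EuclideanSpace ℂ (Fin t)) = 2 * t := by
  rw [← Module.finrank_mul_finrank ℝ ℂ, Complex.finrank_real_complex, finrank_euclideanSpace_fin]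

variable [NeZero t]

lemma measureReal_ball_zero_one_complex :
    (volume : Measure (EuclideanSpace ℂ (Fin t))).real (ball 0 1) = π ^ t / Gamma (t + 1) := by
  have hball : WithLp.toLp 2 ⁻¹' ball (0 : EuclideanSpace ℂ (Fin t)) 1
      = {x : Fin t → ℂ | (∑ i, ‖x i‖ ^ (2 : ℝ)) ^ (1 / (2 : ℝ)) < 1} := by
    ext x
    simp [EuclideanSpace.norm_eq, sqrt_eq_rpow]
  rw [measureReal_def]
  change (Measure.map _ _ _).toReal = _
  rw [Measure.map_apply (WithLp.measurable_toLp 2 _) measurableSet_ball,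
    hball, Complex.volume_sum_rpow_lt (Fin t) (p := 2) (by norm_num) 1, ENNReal.ofReal_one,
    one_pow, one_mul, ENNReal.toReal_ofReal (by positivity)]
  norm_num

lemma integral_fun_norm_sq_complex (f : ℝ → ℝ) :
    ∫ h : EuclideanSpace ℂ (Fin t), f (‖h‖ ^ 2)
      = π ^ t / Gamma t * ∫ u in Ioi 0, u ^ (t - 1) * f u := by
  have : Nontrivial (EuclideanSpace ℂ (Fin t)) := (WithLp.toLp_injective 2).nontrivial
  have hsubst : ∫ r in Ioi (0 : ℝ), r ^ (2 * t - 1) * f (r ^ 2)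
      = 2⁻¹ * ∫ u in Ioi 0, u ^ (t - 1) * f u := by
    rw [← integral_comp_rpow_Ioi (fun u => u ^ (t - 1) * f u) two_ne_zero, ← integral_const_mul]
    refine setIntegral_congr_fun measurableSet_Ioi fun r (hr : 0 < r) => ?_
    have : 2 * t - 1 = 2 * (t - 1) + 1 := by have := NeZero.pos t; omega
    rw [abs_two, show (2 : ℝ) - 1 = 1 by norm_num, rpow_one, rpow_two, smul_eq_mul, this,
      pow_succ, pow_mul]
    ring
  rw [integral_fun_norm_addHaar volume (fun r => f (r ^ 2)), finrank_real_complex_fin,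
    measureReal_ball_zero_one_complex]
  simp only [nsmul_eq_mul, smul_eq_mul, hsubst]
  have ht : (t : ℝ) ≠ 0 := Nat.cast_ne_zero.2 (NeZero.ne t)
  have hΓ : Gamma t ≠ 0 := (Gamma_pos_of_pos (by positivity)).ne'
  rw [Gamma_add_one ht]
  push_cast
  field_simp

end EuclideanSpace

lemma integral_stdCGauss_comp_norm_sq (t : ℕ) [NeZero t] (g : ℝ → ℝ) :
    ∫ h, g (‖h‖ ^ 2) ∂stdCGauss t = (Gamma t)⁻¹ * ∫ u in Ioi 0, u ^ (t - 1) * exp (-u) * g u := by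
  rw [stdCGauss, integral_withDensity_eq_integral_toReal_smul (by fun_prop)
    (.of_forall fun _ => ENNReal.ofReal_lt_top)]
  simp only [ENNReal.toReal_ofReal (by positivity : (0 : ℝ) ≤ (π ^ t)⁻¹ * exp (-_)), smul_eq_mul]
  have hΓ : Gamma t ≠ 0 := (Gamma_pos_of_pos (Nat.cast_pos.2 (NeZero.pos t))).ne'
  rw [EuclideanSpace.integral_fun_norm_sq_complex fun u => (π ^ t)⁻¹ * exp (-u) * g u,
    ← integral_const_mul, ← integral_const_mul]
  refine integral_congr_ae (.of_forall fun u => ?_)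
  field_simp

lemma pow_mul_integral_gaussianQ_stdCGauss (t : ℕ) [NeZero t] {P : ℝ} (hP : 0 < P) :
    P ^ t * ∫ h, gaussianQ √(2 * ‖h‖ ^ 2 * P) ∂stdCGauss t
      = (Gamma t)⁻¹ * ∫ v in Ioi 0, gaussianQ √(2 * v) * v ^ (t - 1) * exp (-(v / P)) := by
  set F := fun v => gaussianQ √(2 * v) * v ^ (t - 1) * exp (-(v / P))
  have hF : ∀ u, F (P * u) = P ^ (t - 1) * (u ^ (t - 1) * exp (-u) * gaussianQ √(2 * u * P)) :=
    fun u => by simp only [F, mul_div_cancel_left₀ u hP.ne', mul_pow]; ring_nf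
  have hPt : P ^ t = P * P ^ (t - 1) := by rw [← pow_succ', Nat.sub_add_cancel (NeZero.pos t)]
  calc P ^ t * ∫ h, gaussianQ √(2 * ‖h‖ ^ 2 * P) ∂stdCGauss t
      = (Gamma t)⁻¹ * (P * ∫ u in Ioi 0, F (P * u)) := by
        rw [integral_stdCGauss_comp_norm_sq t fun u => gaussianQ √(2 * u * P)]
        simp only [hF, integral_const_mul, hPt]
        ring
    _ = (Gamma t)⁻¹ * ∫ v in Ioi 0, F v := by
        rw [integral_comp_mul_left_Ioi F 0 hP, mul_zero, smul_eq_mul, mul_inv_cancel_left₀ hP.ne']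

lemma tendsto_setIntegral_mul_exp_neg_div_atTop {F : ℝ → ℝ} (hF : IntegrableOn F (Ioi 0)) :
    Tendsto (fun P => ∫ v in Ioi 0, F v * exp (-(v / P))) atTop (𝓝 (∫ v in Ioi 0, F v)) := by
  have hexp : ∀ P : ℝ, Continuous fun v => exp (-(v / P)) := by fun_prop
  refine tendsto_integral_filter_of_dominated_convergence (fun v => ‖F v‖)
    (.of_forall fun P => hF.aestronglyMeasurable.mul (hexp P).aestronglyMeasurable)
    ?_ hF.norm (.of_forall fun v => ?_)
  · filter_upwards [eventually_gt_atTop 0] with P hP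
    refine ae_restrict_of_forall_mem measurableSet_Ioi fun v (hv : 0 < v) => ?_
    rw [norm_mul, norm_of_nonneg (exp_pos _).le]
    exact mul_le_of_le_one_right (norm_nonneg _) (exp_le_one_iff.2 (neg_nonpos.2 (by positivity)))
  · simpa using ((tendsto_const_nhds.div_atTop tendsto_id).neg.rexp).const_mul (F v)

/-- Full-CSIT diversity and array gains for beamforming:
`P^t · SERfull(P) → (1/Γ(t)) ∫_0^∞ Q(√(2u)) u^{t-1} du`, a finite and strictly positive
limit; in particular the full-CSIT SER has diversity gain exactly `t`. -/
theorem full_csit_gains (t : ℕ) (ht : 1 ≤ t) :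
    MeasureTheory.IntegrableOn
        (fun u : ℝ => gaussianQ (Real.sqrt (2 * u)) * u ^ (t - 1)) (Set.Ioi 0) ∧
    Filter.Tendsto
      (fun P : ℝ => P ^ t * ∫ h, gaussianQ (Real.sqrt (2 * ‖h‖ ^ 2 * P)) ∂(stdCGauss t))
      Filter.atTop
      (nhds ((Real.Gamma t)⁻¹
        * ∫ u in Set.Ioi (0 : ℝ), gaussianQ (Real.sqrt (2 * u)) * u ^ (t - 1))) ∧
    0 < (Real.Gamma t)⁻¹
        * ∫ u in Set.Ioi (0 : ℝ), gaussianQ (Real.sqrt (2 * u)) * u ^ (t - 1) := by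
  have : NeZero t := ⟨by omega⟩
  have hint := integrableOn_gaussianQ_sqrt_two_mul_mul_pow (t - 1)
  refine ⟨hint, ?_, mul_pos (inv_pos.2 (Gamma_pos_of_pos (Nat.cast_pos.2 ht)))
    (integral_Ioi_pos_of_pos hint fun u (hu : 0 < u) => mul_pos (gaussianQ_pos _) (pow_pos hu _))⟩
  refine ((tendsto_setIntegral_mul_exp_neg_div_atTop hint).const_mul _).congr' ?_
  filter_upwards [eventually_gt_atTop 0] with P hP
  exact (pow_mul_integral_gaussianQ_stdCGauss t hP).symm
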